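/- arXiv:1306.1473 — 2 statements merged into one kernel-verified Lean document; each statement's English description precedes it below -/
import Mathlib

section
/- Let m ≥ 1, let k₁, k₂ be natural numbers, let α₁, α₂, β₁, β₂, ω₁, ω₂, s be complex numbers with ω₁² = −1, ω₂ = −ω₁ and s ≠ 0. Let M(m) be the 2m×2m block matrix with blocks ((α₁+sβ₁)ω₁^{k₁})·I, ((α₁+s⁻¹β₁)ω₂^{k₁})·I, ((α₂+sβ₂)ω₁^{k₂})·I, ((α₂+s⁻¹β₂)ω₂^{k₂})·I (where I is the m×m identity matrix). Define θ₁ = β₁α₂ω₁^{k₁}ω₂^{k₂} − α₁β₂ω₂^{k₁}ω₁^{k₂}, θ₋₁ = α₁β₂ω₁^{k₁}ω₂^{k₂} − β₁α₂ω₂^{k₁}ω₁^{k₂}, and θ₀ = (α₁α₂+β₁β₂)(ω₁^{k₁}ω₂^{k₂} − ω₂^{k₁}ω₁^{k₂}). Then det M(m) = (θ₋₁·s⁻¹ + θ₀ + θ₁·s)^m. Consequently, if θ₁ ≠ 0 and θ₋₁ ≠ 0 (i.e. the scalar boundary conditions are regular), then the extreme coefficients Θ_m = θ₁^m and Θ₋ₘ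 = θ₋₁^m of the Laurent expansion of det M(m) in s are both nonzero (i.e. the vector boundary conditions are regular). -/
open Matrix

/-- Up to a reindexing, the block matrix is the Kronecker product `!![a, b; c, d] ⊗ₖ 1`. -/
theorem Matrix.det_fromBlocks_smul_one {R n : Type*} [CommRing R] [Fintype n] [DecidableEq n]
    (a b c d : R) :
    (fromBlocks (a • 1) (b • 1) (c • 1) (d • 1) : Matrix (n ⊕ n) (n ⊕ n) R).det
      = (a * d - b * c) ^ Fintype.card n := by
  let e : Fin 2 × n ≃ n ⊕ n :=
    (finTwoEquiv.prodCongr (Equiv.refl n)).trans (Equiv.boolProdEquivSum n)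
  have hkron : (fromBlocks (a • 1) (b • 1) (c • 1) (d • 1) : Matrix (n ⊕ n) (n ⊕ n) R)
      = reindex e e (kroneckerMap (· * ·) !![a, b; c, d] 1) := by
    ext (i | i) (j | j) <;> simp [e, one_apply] <;> rfl
  rw [hkron, det_reindex_self, det_kronecker, det_fin_two_of, det_one, one_pow, mul_one]

theorem regularity_vector_from_scalar_general (m : ℕ) (k₁ k₂ : ℕ)
    (α₁ α₂ β₁ β₂ ω₁ ω₂ s : ℂ) (hs : s ≠ 0)
    (θ₁ θ₀ θneg : ℂ)
    (hθ₁ : θ₁ = β₁ * α₂ * ω₁ ^ k₁ * ω₂ ^ k₂ - α₁ * β₂ * ω₂ ^ k₁ * ω₁ ^ k₂)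
    (hθneg : θneg = α₁ * β₂ * ω₁ ^ k₁ * ω₂ ^ k₂ - β₁ * α₂ * ω₂ ^ k₁ * ω₁ ^ k₂)
    (hθ₀ : θ₀ = (α₁ * α₂ + β₁ * β₂) * (ω₁ ^ k₁ * ω₂ ^ k₂ - ω₂ ^ k₁ * ω₁ ^ k₂)) :
    (Matrix.fromBlocks
        (((α₁ + s * β₁) * ω₁ ^ k₁) • (1 : Matrix (Fin m) (Fin m) ℂ))
        (((α₁ + s⁻¹ * β₁) * ω₂ ^ k₁) • (1 : Matrix (Fin m) (Fin m) ℂ))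
        (((α₂ + s * β₂) * ω₁ ^ k₂) • (1 : Matrix (Fin m) (Fin m) ℂ))
        (((α₂ + s⁻¹ * β₂) * ω₂ ^ k₂) • (1 : Matrix (Fin m) (Fin m) ℂ))).det
      = (θneg * s⁻¹ + θ₀ + θ₁ * s) ^ m ∧
    (θ₁ ≠ 0 → θneg ≠ 0 → θ₁ ^ m ≠ 0 ∧ θneg ^ m ≠ 0) := by
  have hscalar : (α₁ + s * β₁) * ω₁ ^ k₁ * ((α₂ + s⁻¹ * β₂) * ω₂ ^ k₂)
      - (α₁ + s⁻¹ * β₁) * ω₂ ^ k₁ * ((α₂ + s * β₂) * ω₁ ^ k₂)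
      = θneg * s⁻¹ + θ₀ + θ₁ * s := by
    subst hθ₁ hθneg hθ₀
    field_simp
    ring
  refine ⟨?_, fun h₁ hneg => ⟨pow_ne_zero m h₁, pow_ne_zero m hneg⟩⟩
  rw [det_fromBlocks_smul_one, Fintype.card_fin, hscalar]

theorem regularity_vector_from_scalar (m : ℕ) (hm : 1 ≤ m) (k₁ k₂ : ℕ)
    (α₁ α₂ β₁ β₂ ω₁ ω₂ s : ℂ) (hω₁ : ω₁ ^ 2 = -1) (hω₂ : ω₂ = -ω₁) (hs : s ≠ 0)
    (θ₁ θ₀ θneg : ℂ)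
    (hθ₁ : θ₁ = β₁ * α₂ * ω₁ ^ k₁ * ω₂ ^ k₂ - α₁ * β₂ * ω₂ ^ k₁ * ω₁ ^ k₂)
    (hθneg : θneg = α₁ * β₂ * ω₁ ^ k₁ * ω₂ ^ k₂ - β₁ * α₂ * ω₂ ^ k₁ * ω₁ ^ k₂)
    (hθ₀ : θ₀ = (α₁ * α₂ + β₁ * β₂) * (ω₁ ^ k₁ * ω₂ ^ k₂ - ω₂ ^ k₁ * ω₁ ^ k₂)) :
    (Matrix.fromBlocks
        (((α₁ + s * β₁) * ω₁ ^ k₁) • (1 : Matrix (Fin m) (Fin m) ℂ))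
        (((α₁ + s⁻¹ * β₁) * ω₂ ^ k₁) • (1 : Matrix (Fin m) (Fin m) ℂ))
        (((α₂ + s * β₂) * ω₁ ^ k₂) • (1 : Matrix (Fin m) (Fin m) ℂ))
        (((α₂ + s⁻¹ * β₂) * ω₂ ^ k₂) • (1 : Matrix (Fin m) (Fin m) ℂ))).det
      = (θneg * s⁻¹ + θ₀ + θ₁ * s) ^ m ∧
    (θ₁ ≠ 0 → θneg ≠ 0 → θ₁ ^ m ≠ 0 ∧ θneg ^ m ≠ 0) :=
  regularity_vector_from_scalar_general m k₁ k₂ α₁ α₂ β₁ β₂ ω₁ ω₂ s hs θ₁ θ₀ θneg hθ₁ hθneg hθ₀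
end

section
/- Let H be a complex inner product space, with inner product (·,·) linear in the first argument and conjugate-linear in the second. Let S, R : H → H be linear maps, let ψ ∈ H, let λ, ρ ∈ ℂ with λ ≠ ρ, and let φ : ℕ → H be a sequence of vectors. Assume: (i) Sψ + Rψ = λ·ψ; (ii) (Su, φ₀) = ρ·(u, φ₀) for every u ∈ H; and (iii) for every p ∈ ℕ and every u ∈ H, (Su, φ_{p+1}) = ρ·(u, φ_{p+1}) + (u, φ_p). Then for every s ∈ ℕ, (ψ, φ_s) = Σ_{p=0}^{s} (Rψ, φ_p) / (λ − ρ)^{s+1−p}. -/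
variable {H : Type*} [NormedAddCommGroup H] [InnerProductSpace ℂ H]

/-- The inner product `(x, y)`, linear in the first argument and conjugate-linear
in the second, expressed via Mathlib's `inner` (which is linear in the second
argument) as `⟪y, x⟫`. -/
local notation "⟨" x ", " y "⟩" => (inner ℂ y x : ℂ)

/-! Pairing the eigenvalue equation `Sψ = λψ - Rψ` with the Jordan chain `φ` of `S*` gives the
scalar recurrence `(λ - ρ) a₀ = r₀`, `(λ - ρ) a_{p+1} = r_{p+1} + a_p` for `a_p = (ψ, φ_p)` and
`r_p = (Rψ, φ_p)`; unrolling it yields the formula. -/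

theorem eq_sum_div_pow_of_mul_succ_eq {K : Type*} [Field K] {c : K} (hc : c ≠ 0)
    {a r : ℕ → K} (h₀ : c * a 0 = r 0) (hsucc : ∀ p, c * a (p + 1) = r (p + 1) + a p) (s : ℕ) :
    a s = ∑ p ∈ Finset.range (s + 1), r p / c ^ (s + 1 - p) := by
  induction s with
  | zero => simp [eq_div_iff hc, mul_comm, h₀]
  | succ s ih =>
    have hstep : a (s + 1) = r (s + 1) / c + a s / c := by
      rw [← add_div, eq_div_iff hc, mul_comm, hsucc]
    rw [hstep, ih, Finset.sum_range_succ _ (s + 1), add_comm, Finset.sum_div]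
    congr 1
    · refine Finset.sum_congr rfl fun p hp => ?_
      rw [div_div, ← pow_succ, Nat.sub_add_comm (Finset.mem_range.mp hp).le]
    · simp

theorem perturbation_identity_chain (S R : H →ₗ[ℂ] H) (ψ : H) (lam ρ : ℂ)
    (hne : lam ≠ ρ) (φ : ℕ → H)
    (h₁ : S ψ + R ψ = lam • ψ)
    (h₂ : ∀ u : H, ⟨S u, φ 0⟩ = ρ * ⟨u, φ 0⟩)
    (h₃ : ∀ p : ℕ, ∀ u : H, ⟨S u, φ (p + 1)⟩ = ρ * ⟨u, φ (p + 1)⟩ + ⟨u, φ p⟩) :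
    ∀ s : ℕ, ⟨ψ, φ s⟩ = ∑ p ∈ Finset.range (s + 1), ⟨R ψ, φ p⟩ / (lam - ρ) ^ (s + 1 - p) := by
  have hS : ∀ v : H, ⟨S ψ, v⟩ = lam * ⟨ψ, v⟩ - ⟨R ψ, v⟩ := fun v => by
    rw [eq_sub_of_add_eq h₁, inner_sub_right, inner_smul_right]
  exact eq_sum_div_pow_of_mul_succ_eq (a := fun p => ⟨ψ, φ p⟩) (sub_ne_zero.mpr hne)
    (by linear_combination h₂ ψ - hS (φ 0))
    (fun p => by linear_combination h₃ p ψ - hS (φ (p + 1)))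
end
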